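/- Every connected graph G of order n ≥ 6 with Δ(G) = n − 3 and sdiam_3(G) = 3 has at least 2n − 5 edges. -/

import Mathlib

open SimpleGraph

/-- The Steiner distance of a vertex set `S` in a graph `G`: the minimum number of edges
of a connected subgraph of `G` whose vertex set contains `S`. -/
noncomputable def steinerDist {V : Type*} (G : SimpleGraph V) (S : Set V) : ℕ :=
  sInf {m : ℕ | ∃ H : G.Subgraph, H.Connected ∧ S ⊆ H.verts ∧ H.edgeSet.ncard = m}

/-- The Steiner `k`-diameter of `G`: the maximum Steiner distance over all `k`-element
vertex subsets. -/
noncomputable def sdiam {V : Type*} [Fintype V] (G : SimpleGraph V) (k : ℕ) : ℕ :=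
  sSup {m : ℕ | ∃ S : Finset V, S.card = k ∧ steinerDist G ↑S = m}

/-- The maximum degree of `G`. -/
noncomputable def maxDeg {V : Type*} [Fintype V] (G : SimpleGraph V) : ℕ :=
  Finset.univ.sup fun v => (G.neighborSet v).ncard

/-- The minimum degree of `G`. -/
noncomputable def minDeg {V : Type*} [Fintype V] (G : SimpleGraph V) : ℕ :=
  sInf {d : ℕ | ∃ v : V, (G.neighborSet v).ncard = d}

/-- `e3 n ℓ d` : minimum number of edges of a graph of order `n` with maximum degree `ℓ`
and Steiner 3-diameter at most `d` (`⊤` if no such graph exists). -/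
noncomputable def e3 (n ℓ d : ℕ) : ℕ∞ :=
  sInf {m : ℕ∞ | ∃ G : SimpleGraph (Fin n),
    maxDeg G = ℓ ∧ sdiam G 3 ≤ d ∧ (G.edgeSet.ncard : ℕ∞) = m}

/-! Let `v` be a vertex of maximum degree `n - 3` and `x`, `y` its two non-neighbours. A Steiner
tree of three vertices with at most three edges forces `d(a,b) + d(b,c) + d(c,a) ≤ 6`. Applied to
`{v, x, y}` this gives `d(x,y) ≤ 2`, and applied to `{w, x, y}` it puts every other vertex `w` at
distance at most `2` from `x` or `y`; these short paths avoid `v`, which is adjacent to neither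
`x` nor `y`. Hence `G - v` is connected and has at least `n - 2` edges, which together with the
`n - 3` edges at `v` gives `2n - 5`. -/

namespace SimpleGraph

variable {V : Type*} {G : SimpleGraph V}

theorem Walk.IsTrail.ncard_edgeSet {u v : V} {p : G.Walk u v} (hp : p.IsTrail) :
    p.edgeSet.ncard = p.length := by
  classical
  rw [← p.length_edges, ← List.toFinset_card_of_nodup hp.edges_nodup, ← Set.ncard_coe_finset]
  simp [Walk.edgeSet]

theorem Walk.IsTrail.length_le_ncard {u v : V} {p : G.Walk u v} (hp : p.IsTrail)
    {s : Set (Sym2 V)} (hs : s.Finite) (hps : p.edgeSet ⊆ s) : p.length ≤ s.ncard :=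
  hp.ncard_edgeSet ▸ Set.ncard_le_ncard hps hs

theorem Walk.IsTrail.mem_support_of_ncard_le {H : G.Subgraph} (hH : H.Connected)
    (hfin : H.edgeSet.Finite) {u v : V} {p : G.Walk u v} (hp : p.IsTrail)
    (hpH : p.toSubgraph ≤ H) (hlen : H.edgeSet.ncard ≤ p.length) {r : V} (hr : r ∈ H.verts) :
    r ∈ p.support := by
  obtain rfl | hru := eq_or_ne r u
  · exact p.start_mem_support
  obtain ⟨q, hq⟩ := ((Subgraph.connected_iff_forall_exists_walk_subgraph H).1 hH).2 hr
    (hpH.1 p.start_mem_verts_toSubgraph)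
  cases q with
  | nil => exact absurd rfl hru
  | @cons _ w _ hadj q =>
    have hedge : s(r, w) ∈ H.edgeSet := Subgraph.edgeSet_mono hq (by simp)
    have hpE : p.edgeSet = H.edgeSet := by
      refine Set.eq_of_subset_of_ncard_le ?_ (hp.ncard_edgeSet ▸ hlen) hfin
      rw [← p.edgeSet_toSubgraph]
      exact Subgraph.edgeSet_mono hpH
    exact p.fst_mem_support_of_mem_edges (hpE ▸ hedge : s(r, w) ∈ p.edgeSet)

theorem Subgraph.Connected.exists_isPath {H : G.Subgraph} (hH : H.Connected) {a b : V}
    (ha : a ∈ H.verts) (hb : b ∈ H.verts) : ∃ p : G.Walk a b, p.IsPath ∧ p.toSubgraph ≤ H := by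
  classical
  obtain ⟨p, hp⟩ := ((Subgraph.connected_iff_forall_exists_walk_subgraph H).1 hH).2 ha hb
  exact ⟨p.bypass, p.bypass_isPath, Walk.toSubgraph_bypass_le_toSubgraph.trans hp⟩

namespace Subgraph.Connected

variable {H : G.Subgraph} (hH : H.Connected) (hfin : H.edgeSet.Finite) {a b c : V}
include hH hfin

theorem exists_isPath_length_le (ha : a ∈ H.verts) (hb : b ∈ H.verts) :
    ∃ p : G.Walk a b, p.IsPath ∧ p.toSubgraph ≤ H ∧ p.length ≤ H.edgeSet.ncard := by
  obtain ⟨p, hp, hpH⟩ := hH.exists_isPath ha hb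
  refine ⟨p, hp, hpH, hp.isTrail.length_le_ncard hfin ?_⟩
  rw [← p.edgeSet_toSubgraph]
  exact Subgraph.edgeSet_mono hpH

theorem dist_le_ncard_edgeSet (ha : a ∈ H.verts) (hb : b ∈ H.verts) :
    G.dist a b ≤ H.edgeSet.ncard := by
  obtain ⟨p, -, -, hp⟩ := hH.exists_isPath_length_le hfin ha hb
  exact (dist_le p).trans hp

theorem dist_add_dist_le_of_ncard_edgeSet_le_dist (ha : a ∈ H.verts) (hb : b ∈ H.verts)
    (hc : c ∈ H.verts) (h : H.edgeSet.ncard ≤ G.dist a b) :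
    G.dist a c + G.dist c b ≤ G.dist a b := by
  classical
  obtain ⟨p, hp, hpH, hlen⟩ := hH.exists_isPath_length_le hfin ha hb
  have hcp : c ∈ p.support :=
    hp.isTrail.mem_support_of_ncard_le hH hfin hpH (h.trans (dist_le p)) hc
  calc G.dist a c + G.dist c b ≤ (p.takeUntil c hcp).length + (p.dropUntil c hcp).length :=
        add_le_add (dist_le _) (dist_le _)
    _ = p.length := by rw [← Walk.length_append, p.take_spec hcp]
    _ ≤ G.dist a b := hlen.trans h

theorem dist_add_dist_add_dist_le_six (h3 : H.edgeSet.ncard ≤ 3) (ha : a ∈ H.verts)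
    (hb : b ∈ H.verts) (hc : c ∈ H.verts) : G.dist a b + G.dist b c + G.dist c a ≤ 6 := by
  -- A pair at distance `|E(H)|` has the third vertex between them; otherwise all three
  -- distances are at most `|E(H)| - 1 ≤ 2`.
  have hab := hH.dist_le_ncard_edgeSet hfin ha hb
  have hbc := hH.dist_le_ncard_edgeSet hfin hb hc
  have hca := hH.dist_le_ncard_edgeSet hfin hc ha
  have key : ∀ {x y z : V}, x ∈ H.verts → y ∈ H.verts → z ∈ H.verts →
      G.dist x y < H.edgeSet.ncard ∨ G.dist x z + G.dist z y ≤ G.dist x y := fun hx hy hz ↦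
    (lt_or_ge _ _).imp_right (hH.dist_add_dist_le_of_ncard_edgeSet_le_dist hfin hx hy hz)
  have := key ha hb hc
  have := key hb hc ha
  have := key hc ha hb
  have := dist_comm (G := G) (u := a) (v := c)
  have := dist_comm (G := G) (u := b) (v := a)
  have := dist_comm (G := G) (u := c) (v := b)
  omega

end Subgraph.Connected

theorem steinerDist_le_sdiam [Fintype V] {S : Finset V} {k : ℕ} (hS : S.card = k) :
    steinerDist G S ≤ sdiam G k := by
  refine le_csSup ?_ ⟨S, hS, rfl⟩
  refine ((Set.finite_range fun S : Finset V ↦ steinerDist G S).subset ?_).bddAbove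
  rintro _ ⟨S, -, rfl⟩
  exact ⟨S, rfl⟩

theorem Connected.exists_subgraph_ncard_edgeSet_eq_steinerDist (hG : G.Connected) (S : Set V) :
    ∃ H : G.Subgraph, H.Connected ∧ S ⊆ H.verts ∧ H.edgeSet.ncard = steinerDist G S :=
  Nat.sInf_mem (s := {m | ∃ H : G.Subgraph, H.Connected ∧ S ⊆ H.verts ∧ H.edgeSet.ncard = m})
    ⟨_, ⊤, Subgraph.connected_iff'.2 (Subgraph.topIso.connected_iff.2 hG),
    Set.subset_univ S, rfl⟩

theorem Connected.dist_add_dist_add_dist_le_six [Fintype V] (hG : G.Connected)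
    (hsd : sdiam G 3 ≤ 3) {a b c : V} (hab : a ≠ b) (hac : a ≠ c) (hbc : b ≠ c) :
    G.dist a b + G.dist b c + G.dist c a ≤ 6 := by
  classical
  obtain ⟨H, hH, hSH, hHS⟩ :=
    hG.exists_subgraph_ncard_edgeSet_eq_steinerDist ↑({a, b, c} : Finset V)
  have h3 : H.edgeSet.ncard ≤ 3 :=
    hHS ▸ (steinerDist_le_sdiam (Finset.card_eq_three.2 ⟨a, b, c, hab, hac, hbc, rfl⟩)).trans hsd
  exact hH.dist_add_dist_add_dist_le_six (Set.toFinite _) h3 (hSH (by simp)) (hSH (by simp))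
    (hSH (by simp))

theorem exists_adj_adj_of_dist_eq_two {u w : V} (h : G.dist u w = 2) :
    ∃ z, G.Adj u z ∧ G.Adj z w := by
  obtain ⟨p, hp⟩ := exists_walk_of_dist_ne_zero (h ▸ two_ne_zero)
  rw [h] at hp
  match p, hp with
  | .cons h₁ (.cons h₂ .nil), _ => exact ⟨_, h₁, h₂⟩

theorem Connected.reachable_induce_compl_singleton (hG : G.Connected) {v a b : V} (ha : a ≠ v)
    (hb : b ≠ v) (hvb : ¬G.Adj v b) (h : G.dist a b ≤ 2) :
    (G.induce {v}ᶜ).Reachable ⟨a, ha⟩ ⟨b, hb⟩ := by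
  interval_cases hd : G.dist a b
  · obtain rfl := hG.dist_eq_zero_iff.1 hd
    rfl
  · exact Adj.reachable (G := G.induce {v}ᶜ) (induce_adj.2 (dist_eq_one_iff_adj.1 hd))
  · obtain ⟨z, haz, hzb⟩ := exists_adj_adj_of_dist_eq_two hd
    have hz : z ≠ v := by rintro rfl; exact hvb hzb
    exact (Adj.reachable (G := G.induce {v}ᶜ) (v := ⟨z, hz⟩) (induce_adj.2 haz)).trans
      (Adj.reachable (induce_adj.2 hzb))

theorem Connected.induce_compl_singleton_of_sdiam_le_three [Fintype V] (hG : G.Connected)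
    (hsd : sdiam G 3 ≤ 3) {v x y : V} (hxy : x ≠ y) (hvx : v ≠ x) (hvy : v ≠ y)
    (hvx' : ¬G.Adj v x) (hvy' : ¬G.Adj v y) : (G.induce {v}ᶜ).Connected := by
  have hxy' : (G.induce {v}ᶜ).Reachable ⟨x, hvx.symm⟩ ⟨y, hvy.symm⟩ := by
    have := hG.dist_add_dist_add_dist_le_six hsd hvx hvy hxy
    have := hG.one_lt_dist_of_ne_of_not_adj hvx hvx'
    have := hG.one_lt_dist_of_ne_of_not_adj hvy.symm (hvy' ∘ G.adj_symm)
    exact hG.reachable_induce_compl_singleton _ _ hvy' (by omega)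
  refine (connected_iff_exists_forall_reachable _).2 ⟨⟨x, hvx.symm⟩, ?_⟩
  rintro ⟨w, hwv⟩
  obtain rfl | hwx := eq_or_ne w x
  · rfl
  obtain rfl | hwy := eq_or_ne w y
  · exact hxy'
  have := hG.dist_add_dist_add_dist_le_six hsd hwx hwy hxy
  have := hG.pos_dist_of_ne hxy
  have := dist_comm (G := G) (u := y) (v := w)
  rcases (by omega : G.dist w x ≤ 2 ∨ G.dist w y ≤ 2) with h | h
  · exact (hG.reachable_induce_compl_singleton hwv _ hvx' h).symm
  · exact hxy'.trans (hG.reachable_induce_compl_singleton hwv _ hvy' h).symm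

theorem degree_add_card_le_of_connected_induce_compl_singleton [Fintype V] [DecidableEq V]
    [DecidableRel G.Adj] {v : V} (h : (G.induce {v}ᶜ).Connected) :
    G.degree v + Fintype.card V ≤ G.edgeFinset.card + 2 := by
  have hcard := h.card_vert_le_card_edgeSet_add_one
  rw [Nat.card_eq_fintype_card, Nat.card_eq_fintype_card, ← edgeFinset_card,
    card_edgeFinset_induce_compl_singleton, card_edgeFinset_deleteIncidenceSet,
    Fintype.card_compl_set, Set.card_singleton] at hcard
  have := G.degree_le_card_edgeFinset v
  have := Fintype.card_pos_iff.2 ⟨v⟩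
  omega

theorem ncard_neighborSet_eq_degree [Fintype V] [DecidableRel G.Adj] (v : V) :
    (G.neighborSet v).ncard = G.degree v := by
  rw [Set.ncard_eq_toFinset_card', ← neighborFinset_def, card_neighborFinset_eq_degree]

theorem exists_degree_eq_maxDeg [Fintype V] [DecidableRel G.Adj] [Nonempty V] :
    ∃ v, G.degree v = maxDeg G := by
  obtain ⟨v, -, hv⟩ := Finset.exists_mem_eq_sup Finset.univ Finset.univ_nonempty
    fun v ↦ (G.neighborSet v).ncard
  exact ⟨v, by rw [maxDeg, hv, ncard_neighborSet_eq_degree]⟩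

theorem exists_two_not_adj [Fintype V] [DecidableRel G.Adj] {v : V}
    (h : G.degree v + 3 ≤ Fintype.card V) :
    ∃ x y, x ≠ y ∧ v ≠ x ∧ v ≠ y ∧ ¬G.Adj v x ∧ ¬G.Adj v y := by
  classical
  have hcard : 1 < ((G.neighborFinset v)ᶜ.erase v).card := by
    rw [Finset.card_erase_of_mem (by simp), Finset.card_compl, card_neighborFinset_eq_degree]
    omega
  obtain ⟨x, hx, y, hy, hxy⟩ := Finset.one_lt_card.1 hcard
  simp only [Finset.mem_erase, Finset.mem_compl, mem_neighborFinset] at hx hy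
  exact ⟨x, y, hxy, hx.1.symm, hy.1.symm, hx.2, hy.2⟩

end SimpleGraph

theorem stmt18 {V : Type*} [Fintype V] (n : ℕ) (hn : 6 ≤ n)
    (hcard : Fintype.card V = n) (G : SimpleGraph V) (hconn : G.Connected)
    (hmax : maxDeg G = n - 3) (hsd : sdiam G 3 = 3) :
    2 * n - 5 ≤ G.edgeSet.ncard := by
  classical
  have : Nonempty V := hconn.nonempty
  obtain ⟨v, hv⟩ := G.exists_degree_eq_maxDeg
  obtain ⟨x, y, hxy, hvx, hvy, hvx', hvy'⟩ := G.exists_two_not_adj (v := v) (by omega)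
  have hGv := hconn.induce_compl_singleton_of_sdiam_le_three hsd.le hxy hvx hvy hvx' hvy'
  have := degree_add_card_le_of_connected_induce_compl_singleton hGv
  rw [Set.ncard_eq_toFinset_card' G.edgeSet, ← edgeFinset]
  omega
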